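/- Let n ≥ 3 and let F(λ) = σ_n(λ)/σ_{n-2}(λ) on the open positive cone in ℝ^n. There exist constants c(n), C(n) > 0 depending only on n such that for every λ ∈ ℝ^n with λ_1 ≥ λ_2 ≥ ⋯ ≥ λ_n > 0, c(n)·F(λ)²/λ_n ≤ ∑_{i=1}^{n} λ_i²·∂F/∂λ_i(λ) ≤ C(n)·F(λ)²/λ_n. -/

import Mathlib

/-- The k-th elementary symmetric polynomial of `lam : Fin n → ℝ`. -/
noncomputable def esig (n k : ℕ) (lam : Fin n → ℝ) : ℝ :=
  ∑ s ∈ Finset.powersetCard k (Finset.univ : Finset (Fin n)), ∏ j ∈ s, lam j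

/-- The quotient operator `F = σ_n / σ_{n-2}`. -/
noncomputable def Fquot (n : ℕ) (lam : Fin n → ℝ) : ℝ :=
  esig n n lam / esig n (n - 2) lam

/-- The partial derivative of `F = σ_n/σ_{n-2}` in the `i`-th coordinate at `lam`. -/
noncomputable def partialF (n : ℕ) (i : Fin n) (lam : Fin n → ℝ) : ℝ :=
  deriv (fun t : ℝ => Fquot n (Function.update lam i t)) (lam i)


open Finset

noncomputable def eNot (n : ℕ) (i : Fin n) (k : ℕ) (lam : Fin n → ℝ) : ℝ :=
  ∑ s ∈ Finset.powersetCard k ((Finset.univ : Finset (Fin n)).erase i), ∏ j ∈ s, lam j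

lemma esig_affine (n : ℕ) (i : Fin n) (k : ℕ) (lam : Fin n → ℝ) (t : ℝ) :
    esig n (k + 1) (Function.update lam i t)
      = eNot n i (k + 1) lam + t * eNot n i k lam := by
  have hu : (univ : Finset (Fin n)) = insert i (univ.erase i) :=
    (insert_erase (mem_univ i)).symm
  have hnotmem : i ∉ (univ : Finset (Fin n)).erase i := notMem_erase i _
  rw [esig, hu, powersetCard_succ_insert hnotmem]
  have hdisj : Disjoint (powersetCard (k+1) ((univ : Finset (Fin n)).erase i))
      ((powersetCard k ((univ : Finset (Fin n)).erase i)).image (insert i)) := by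
    rw [disjoint_right]
    intro s hs hs'
    obtain ⟨u, hu', rfl⟩ := mem_image.mp hs
    exact (mem_erase.mp ((mem_powersetCard.mp hs').1 (mem_insert_self i u))).1 rfl
  rw [sum_union hdisj]
  congr 1
  · refine sum_congr rfl fun s hs => prod_congr rfl fun j hj => ?_
    have : j ≠ i := by
      intro h; subst h
      exact (mem_erase.mp ((mem_powersetCard.mp hs).1 hj)).1 rfl
    exact Function.update_of_ne this t lam
  · rw [sum_image (by
      intro s hs s' hs' h
      have hiS : i ∉ s := fun h' => (mem_erase.mp ((mem_powersetCard.mp hs).1 h')).1 rfl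
      have hiS' : i ∉ s' := fun h' => (mem_erase.mp ((mem_powersetCard.mp hs').1 h')).1 rfl
      rw [← erase_insert hiS, ← erase_insert hiS', h])]
    rw [eNot, mul_sum]
    refine sum_congr rfl fun s hs => ?_
    have hiS : i ∉ s := fun h' => (mem_erase.mp ((mem_powersetCard.mp hs).1 h')).1 rfl
    rw [prod_insert hiS, Function.update_self]
    congr 1
    refine prod_congr rfl fun j hj => ?_
    have : j ≠ i := fun h => hiS (h ▸ hj)
    exact Function.update_of_ne this t lam

lemma esig_split (n : ℕ) (i : Fin n) (k : ℕ) (lam : Fin n → ℝ) :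
    esig n (k + 1) lam = eNot n i (k + 1) lam + lam i * eNot n i k lam := by
  have := esig_affine n i k lam (lam i)
  rwa [Function.update_eq_self] at this

lemma key_sum (n k : ℕ) (lam : Fin n → ℝ) :
    ∑ i : Fin n, lam i * eNot n i k lam = ((k : ℝ) + 1) * esig n (k + 1) lam := by
  have lhs : ∑ i : Fin n, lam i * eNot n i k lam
      = ∑ p ∈ (univ : Finset (Fin n)).sigma
          (fun i => powersetCard k ((univ : Finset (Fin n)).erase i)),
          lam p.1 * ∏ j ∈ p.2, lam j := by
    rw [Finset.sum_sigma]
    simp [eNot, Finset.mul_sum]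
  have rhs : ((k : ℝ) + 1) * esig n (k + 1) lam
      = ∑ p ∈ (powersetCard (k + 1) (univ : Finset (Fin n))).sigma (fun t => t),
          lam p.2 * ∏ j ∈ p.1.erase p.2, lam j := by
    rw [Finset.sum_sigma, esig, Finset.mul_sum]
    refine Finset.sum_congr rfl fun t ht => ?_
    have hc : t.card = k + 1 := (Finset.mem_powersetCard.mp ht).2
    rw [Finset.sum_congr rfl (fun i hi => Finset.mul_prod_erase t lam hi),
      Finset.sum_const, hc]
    push_cast
    ring
  rw [lhs, rhs]
  refine Finset.sum_nbij' (fun p => ⟨insert p.1 p.2, p.1⟩) (fun p => ⟨p.2, p.1.erase p.2⟩)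
    ?_ ?_ ?_ ?_ ?_
  · rintro ⟨i, s⟩ hp
    simp only [Finset.mem_sigma, Finset.mem_univ, true_and] at hp
    obtain ⟨hsub, hcard⟩ := Finset.mem_powersetCard.mp hp
    have hiS : i ∉ s := fun h' => (mem_erase.mp (hsub h')).1 rfl
    simp only [Finset.mem_sigma]
    constructor
    · exact Finset.mem_powersetCard.mpr ⟨Finset.subset_univ _,
        by rw [Finset.card_insert_of_notMem hiS, hcard]⟩
    · exact Finset.mem_insert_self i s
  · rintro ⟨t, i⟩ hp
    simp only [Finset.mem_sigma] at hp
    obtain ⟨ht, hi⟩ := hp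
    obtain ⟨hsub, hcard⟩ := Finset.mem_powersetCard.mp ht
    simp only [Finset.mem_sigma, Finset.mem_univ, true_and]
    exact Finset.mem_powersetCard.mpr ⟨Finset.erase_subset_erase i (Finset.subset_univ t),
      by rw [Finset.card_erase_of_mem hi, hcard]; rfl⟩
  · rintro ⟨i, s⟩ hp
    simp only [Finset.mem_sigma, Finset.mem_univ, true_and] at hp
    have hiS : i ∉ s := fun h' =>
      (mem_erase.mp ((Finset.mem_powersetCard.mp hp).1 h')).1 rfl
    simp [Finset.erase_insert hiS]
  · rintro ⟨t, i⟩ hp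
    simp only [Finset.mem_sigma] at hp
    simp [Finset.insert_erase hp.2]
  · rintro ⟨i, s⟩ hp
    simp only [Finset.mem_sigma, Finset.mem_univ, true_and] at hp
    have hiS : i ∉ s := fun h' =>
      (mem_erase.mp ((Finset.mem_powersetCard.mp hp).1 h')).1 rfl
    simp [Finset.erase_insert hiS]

lemma esig_pos (n k : ℕ) (hk : k ≤ n) (lam : Fin n → ℝ) (hpos : ∀ i, 0 < lam i) :
    0 < esig n k lam := by
  have hne : (powersetCard k (univ : Finset (Fin n))).Nonempty := by
    obtain ⟨t, ht, hc⟩ := Finset.exists_subset_card_eq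
      (show k ≤ (univ : Finset (Fin n)).card by simpa using hk)
    exact ⟨t, mem_powersetCard.mpr ⟨ht, hc⟩⟩
  exact Finset.sum_pos (fun s _ => Finset.prod_pos fun j _ => hpos j) hne

lemma esig_top (n : ℕ) (lam : Fin n → ℝ) : esig n n lam = ∏ j, lam j := by
  have h := powersetCard_self (univ : Finset (Fin n))
  rw [card_univ, Fintype.card_fin] at h
  rw [esig, h, sum_singleton]

lemma eNot_top (n : ℕ) (hn : 1 ≤ n) (i : Fin n) (lam : Fin n → ℝ) :
    eNot n i (n - 1) lam = ∏ j ∈ (univ : Finset (Fin n)).erase i, lam j := by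
  have hc : ((univ : Finset (Fin n)).erase i).card = n - 1 := by
    rw [card_erase_of_mem (mem_univ i), card_univ, Fintype.card_fin]
  rw [eNot, ← hc, powersetCard_self, sum_singleton]

lemma partialF_eq (n : ℕ) (hn : 3 ≤ n) (i : Fin n) (lam : Fin n → ℝ)
    (hpos : ∀ i, 0 < lam i) :
    partialF n i lam =
      (eNot n i (n - 1) lam * esig n (n - 2) lam
        - eNot n i (n - 3) lam * esig n n lam) / (esig n (n - 2) lam) ^ 2 := by
  set A := eNot n i n lam with hA
  set B := eNot n i (n - 1) lam with hB
  set Cc := eNot n i (n - 2) lam with hC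
  set D := eNot n i (n - 3) lam with hD
  have e1 : ∀ t : ℝ, esig n n (Function.update lam i t) = A + t * B := by
    intro t
    have := esig_affine n i (n - 1) lam t
    rwa [show n - 1 + 1 = n from by omega] at this
  have e2 : ∀ t : ℝ, esig n (n - 2) (Function.update lam i t) = Cc + t * D := by
    intro t
    have := esig_affine n i (n - 3) lam t
    rwa [show n - 3 + 1 = n - 2 from by omega] at this
  have hnum : A + lam i * B = esig n n lam := by
    rw [← e1 (lam i), Function.update_eq_self]
  have hden : Cc + lam i * D = esig n (n - 2) lam := by
    rw [← e2 (lam i), Function.update_eq_self]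
  have hdpos : 0 < esig n (n - 2) lam := esig_pos n (n - 2) (by omega) lam hpos
  have hfun : (fun t : ℝ => Fquot n (Function.update lam i t))
      = fun t => (A + t * B) / (Cc + t * D) := by
    funext t; rw [Fquot, e1 t, e2 t]
  have h1 : HasDerivAt (fun t : ℝ => A + t * B) B (lam i) := by
    simpa using ((hasDerivAt_id (lam i)).mul_const B).const_add A
  have h2 : HasDerivAt (fun t : ℝ => Cc + t * D) D (lam i) := by
    simpa using ((hasDerivAt_id (lam i)).mul_const D).const_add Cc
  have hne : Cc + lam i * D ≠ 0 := by rw [hden]; exact ne_of_gt hdpos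
  have hder : deriv (fun t : ℝ => (A + t * B) / (Cc + t * D)) (lam i)
      = (B * (Cc + lam i * D) - (A + lam i * B) * D) / (Cc + lam i * D) ^ 2 :=
    (h1.div h2 hne).deriv
  rw [partialF, hfun, hder, hden, hnum]
  ring

lemma sum_closed (n : ℕ) (hn : 3 ≤ n) (lam : Fin n → ℝ) (hpos : ∀ i, 0 < lam i) :
    ∑ i : Fin n, (lam i) ^ 2 * partialF n i lam
      = ((n : ℝ) - 1) * esig n (n - 1) lam * esig n n lam / (esig n (n - 2) lam) ^ 2 := by
  set p := esig n n lam with hp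
  set q := esig n (n - 1) lam with hq
  set r := esig n (n - 2) lam with hr
  have hBi : ∀ i : Fin n, lam i ^ 2 * eNot n i (n - 1) lam = lam i * p := by
    intro i
    rw [eNot_top n (by omega) i lam, hp, esig_top]
    have := Finset.mul_prod_erase (univ : Finset (Fin n)) lam (mem_univ i)
    rw [← this]; ring
  have hDi : ∀ i : Fin n, lam i * eNot n i (n - 3) lam = r - eNot n i (n - 2) lam := by
    intro i
    have := esig_split n i (n - 3) lam
    rw [show n - 3 + 1 = n - 2 from by omega] at this
    rw [hr]; linarith
  have hkey : ∑ i : Fin n, lam i * eNot n i (n - 2) lam = ((n : ℝ) - 1) * q := by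
    have := key_sum n (n - 2) lam
    rw [show n - 2 + 1 = n - 1 from by omega] at this
    rw [this, hq]
    congr 1
    rw [Nat.cast_sub (by omega)]
    push_cast; ring
  have hD2 : ∑ i : Fin n, lam i ^ 2 * eNot n i (n - 3) lam
      = (∑ i : Fin n, lam i) * r - ((n : ℝ) - 1) * q := by
    calc ∑ i : Fin n, lam i ^ 2 * eNot n i (n - 3) lam
        = ∑ i : Fin n, (lam i * r - lam i * eNot n i (n - 2) lam) := by
          refine sum_congr rfl fun i _ => ?_
          rw [pow_two, mul_assoc, hDi i]; ring
      _ = (∑ i : Fin n, lam i) * r - ((n : ℝ) - 1) * q := by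
          rw [Finset.sum_sub_distrib, ← Finset.sum_mul, hkey]
  calc ∑ i : Fin n, (lam i) ^ 2 * partialF n i lam
      = ∑ i : Fin n, (lam i ^ 2 * eNot n i (n - 1) lam * r
          - lam i ^ 2 * eNot n i (n - 3) lam * p) / r ^ 2 := by
        refine sum_congr rfl fun i _ => ?_
        rw [partialF_eq n hn i lam hpos]; ring
    _ = ((∑ i : Fin n, lam i ^ 2 * eNot n i (n - 1) lam) * r
          - (∑ i : Fin n, lam i ^ 2 * eNot n i (n - 3) lam) * p) / r ^ 2 := by
        rw [← Finset.sum_div, Finset.sum_sub_distrib, ← Finset.sum_mul, ← Finset.sum_mul]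
    _ = ((∑ i : Fin n, lam i) * p * r
          - ((∑ i : Fin n, lam i) * r - ((n : ℝ) - 1) * q) * p) / r ^ 2 := by
        rw [sum_congr rfl (fun i _ => hBi i), ← Finset.sum_mul, hD2]
    _ = ((n : ℝ) - 1) * q * p / r ^ 2 := by ring

lemma bound_low (n : ℕ) (hn : 3 ≤ n) (lam : Fin n → ℝ)
    (hpos : ∀ i, 0 < lam i) :
    esig n n lam ≤ esig n (n - 1) lam * lam ⟨n - 1, Nat.sub_one_lt (by omega)⟩ := by
  set i0 : Fin n := ⟨n - 1, Nat.sub_one_lt (by omega)⟩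
  have hmem : (univ : Finset (Fin n)).erase i0 ∈
      powersetCard (n - 1) (univ : Finset (Fin n)) :=
    mem_powersetCard.mpr ⟨erase_subset _ _,
      by rw [card_erase_of_mem (mem_univ i0), card_univ, Fintype.card_fin]⟩
  have hsingle : ∏ j ∈ (univ : Finset (Fin n)).erase i0, lam j ≤ esig n (n - 1) lam :=
    Finset.single_le_sum (f := fun s => ∏ j ∈ s, lam j)
      (fun s _ => le_of_lt (Finset.prod_pos fun j _ => hpos j)) hmem
  have htop : esig n n lam = lam i0 * ∏ j ∈ (univ : Finset (Fin n)).erase i0, lam j := by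
    rw [esig_top, Finset.mul_prod_erase (univ : Finset (Fin n)) lam (mem_univ i0)]
  rw [htop]
  calc lam i0 * ∏ j ∈ (univ : Finset (Fin n)).erase i0, lam j
      ≤ lam i0 * esig n (n - 1) lam :=
        mul_le_mul_of_nonneg_left hsingle (le_of_lt (hpos i0))
    _ = esig n (n - 1) lam * lam i0 := by ring

lemma bound_high (n : ℕ) (hn : 3 ≤ n) (lam : Fin n → ℝ)
    (hord : ∀ i j : Fin n, i ≤ j → lam j ≤ lam i) (hpos : ∀ i, 0 < lam i) :
    esig n (n - 1) lam * lam ⟨n - 1, Nat.sub_one_lt (by omega)⟩ ≤ (n : ℝ) * esig n n lam := by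
  set i0 : Fin n := ⟨n - 1, Nat.sub_one_lt (by omega)⟩
  have hmin : ∀ i : Fin n, lam i0 ≤ lam i := by
    intro i
    exact hord i i0 (by simp only [Fin.le_def]; show i.val ≤ n - 1; omega)
  have hterm : ∀ t ∈ powersetCard (n - 1) (univ : Finset (Fin n)),
      (∏ j ∈ t, lam j) * lam i0 ≤ esig n n lam := by
    intro t ht
    obtain ⟨hsub, hcard⟩ := mem_powersetCard.mp ht
    have hcd : ((univ : Finset (Fin n)) \ t).card = 1 := by
      rw [Finset.card_sdiff_of_subset hsub, card_univ, Fintype.card_fin, hcard]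
      omega
    obtain ⟨i, hi⟩ := Finset.card_eq_one.mp hcd
    have hsplit : esig n n lam = lam i * ∏ j ∈ t, lam j := by
      rw [esig_top, ← Finset.prod_sdiff hsub, hi, prod_singleton]
    rw [hsplit]
    calc (∏ j ∈ t, lam j) * lam i0 ≤ (∏ j ∈ t, lam j) * lam i :=
          mul_le_mul_of_nonneg_left (hmin i)
            (le_of_lt (Finset.prod_pos fun j _ => hpos j))
      _ = lam i * ∏ j ∈ t, lam j := by ring
  have hcardSet : (powersetCard (n - 1) (univ : Finset (Fin n))).card = n := by
    rw [card_powersetCard, card_univ, Fintype.card_fin,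
      show n - 1 = n - 1 from rfl]
    have := Nat.choose_symm (show 1 ≤ n by omega) (n := n)
    rw [this, Nat.choose_one_right]
  calc esig n (n - 1) lam * lam i0
      = ∑ t ∈ powersetCard (n - 1) (univ : Finset (Fin n)), (∏ j ∈ t, lam j) * lam i0 := by
        rw [esig, Finset.sum_mul]
    _ ≤ ∑ t ∈ powersetCard (n - 1) (univ : Finset (Fin n)), esig n n lam :=
        Finset.sum_le_sum hterm
    _ = (n : ℝ) * esig n n lam := by
        rw [Finset.sum_const, hcardSet, nsmul_eq_mul]

/-- There are `c(n), C(n) > 0` such that for every decreasingly ordered positive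
`λ`, `c·F²/λ_n ≤ ∑_i λ_i²·∂F/∂λ_i ≤ C·F²/λ_n`. -/
theorem stmt_18 (n : ℕ) (hn : 3 ≤ n) :
    ∃ c C : ℝ, 0 < c ∧ 0 < C ∧ ∀ lam : Fin n → ℝ,
      (∀ i j : Fin n, i ≤ j → lam j ≤ lam i) → (∀ i, 0 < lam i) →
      c * (Fquot n lam) ^ 2 / lam ⟨n - 1, by omega⟩ ≤
        ∑ i : Fin n, (lam i) ^ 2 * partialF n i lam ∧
      ∑ i : Fin n, (lam i) ^ 2 * partialF n i lam ≤
        C * (Fquot n lam) ^ 2 / lam ⟨n - 1, by omega⟩ := by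
  have hn' : (3 : ℝ) ≤ (n : ℝ) := by exact_mod_cast hn
  refine ⟨(n : ℝ) - 1, (n : ℝ) * ((n : ℝ) - 1), by linarith, by nlinarith, ?_⟩
  intro lam hord hpos
  have hp : 0 < esig n n lam := esig_pos n n le_rfl lam hpos
  have hq : 0 < esig n (n - 1) lam := esig_pos n (n - 1) (by omega) lam hpos
  have hr : 0 < esig n (n - 2) lam := esig_pos n (n - 2) (by omega) lam hpos
  have hl0 : 0 < lam ⟨n - 1, by omega⟩ := hpos _
  have hS := sum_closed n hn lam hpos
  have hlow := bound_low n hn lam hpos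
  have hhigh := bound_high n hn lam hord hpos
  have hF : Fquot n lam = esig n n lam / esig n (n - 2) lam := rfl
  set p := esig n n lam
  set q := esig n (n - 1) lam
  set r := esig n (n - 2) lam
  set l0 := lam ⟨n - 1, by omega⟩
  constructor
  · rw [hS, hF, div_le_div_iff₀ hl0 (pow_pos hr 2)]
    have hexp : ((n : ℝ) - 1) * (p / r) ^ 2 * r ^ 2 = ((n : ℝ) - 1) * p ^ 2 := by
      field_simp
    rw [hexp]
    nlinarith [mul_nonneg (mul_nonneg (by linarith : (0:ℝ) ≤ (n:ℝ) - 1) hp.le)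
      (by linarith : (0:ℝ) ≤ q * l0 - p)]
  · rw [hS, hF, div_le_div_iff₀ (pow_pos hr 2) hl0]
    have hexp : (n : ℝ) * ((n : ℝ) - 1) * (p / r) ^ 2 * r ^ 2
        = (n : ℝ) * ((n : ℝ) - 1) * p ^ 2 := by field_simp
    rw [hexp]
    nlinarith [mul_nonneg (mul_nonneg (by linarith : (0:ℝ) ≤ (n:ℝ) - 1) hp.le)
      (by linarith : (0:ℝ) ≤ (n : ℝ) * p - q * l0)]
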